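/- q-Seidel matrix identity: given a sequence (a_n)_{n≥0} in a commutative ring, define a_n^0 = a_n and a_n^k = q^n a_n^{k-1} + a_{n+1}^{k-1} for k ≥ 1. Then the final sequence satisfies a_0^n = ∑_{k=0}^n binom_q(n,k) a_k for all n ≥ 0. -/
import Mathlib


/-- The Gaussian (q-)binomial coefficient. -/
def qbinom {R : Type*} [CommRing R] (q : R) : ℕ → ℕ → R
  | _, 0 => 1
  | 0, _ + 1 => 0
  | n + 1, k + 1 => q ^ (k + 1) * qbinom q n (k + 1) + qbinom q n k

lemma qbinom_succ {R : Type*} [CommRing R] (q : R) (n k : ℕ) :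
    qbinom q (n + 1) (k + 1) = q ^ (k + 1) * qbinom q n (k + 1) + qbinom q n k := by
  rw [qbinom]

lemma qbinom_zero' {R : Type*} [CommRing R] (q : R) (n : ℕ) : qbinom q n 0 = 1 := by
  cases n <;> rw [qbinom]

lemma qbinom_eq_zero {R : Type*} [CommRing R] (q : R) :
    ∀ n k : ℕ, n < k → qbinom q n k = 0
  | 0, k + 1, _ => by simp [qbinom]
  | n + 1, k + 1, h => by
    rw [qbinom_succ, qbinom_eq_zero q n (k + 1) (by omega),
      qbinom_eq_zero q n k (by omega)]
    ring

/-- The symmetric Pascal recurrence for Gaussian binomials. -/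
lemma qbinom_succ_succ {R : Type*} [CommRing R] (q : R) :
    ∀ n k : ℕ, qbinom q (n + 1) (k + 1) = qbinom q n (k + 1) + q ^ (n - k) * qbinom q n k
  | 0, 0 => by simp [qbinom]
  | 0, k + 1 => by simp [qbinom]
  | n + 1, 0 => by
    conv_lhs => rw [qbinom_succ q (n + 1) 0, qbinom_succ_succ q n 0]
    conv_rhs => rw [qbinom_succ q n 0]
    rw [qbinom_zero', qbinom_zero', Nat.sub_zero, Nat.sub_zero]
    ring
  | n + 1, k + 1 => by
    rcases lt_or_ge k n with h | h
    · obtain ⟨d, rfl⟩ : ∃ d, n = k + 1 + d := ⟨n - k - 1, by omega⟩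
      conv_lhs => rw [qbinom_succ q (k + 1 + d + 1) (k + 1),
        qbinom_succ_succ q (k + 1 + d) (k + 1), qbinom_succ_succ q (k + 1 + d) k]
      conv_rhs => rw [qbinom_succ q (k + 1 + d) (k + 1), qbinom_succ q (k + 1 + d) k]
      rw [show k + 1 + d - (k + 1) = d from by omega,
        show k + 1 + d - k = d + 1 from by omega,
        show k + 1 + d + 1 - (k + 1) = d + 1 from by omega]
      ring
    · rcases eq_or_lt_of_le h with h' | h'
      · subst h'
        rw [qbinom_succ q (n + 1) (n + 1), qbinom_eq_zero q (n + 1) (n + 2) (by omega),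
          show n + 1 - (n + 1) = 0 from by omega]
        ring
      · rw [qbinom_eq_zero q (n + 2) (k + 2) (by omega),
          qbinom_eq_zero q (n + 1) (k + 2) (by omega),
          qbinom_eq_zero q (n + 1) (k + 1) (by omega)]
        ring

lemma qSeidel_key {R : Type*} [CommRing R] (q : R) (a : ℕ → R)
    (A : ℕ → ℕ → R) (hA0 : ∀ n, A n 0 = a n)
    (hA : ∀ n k, A n (k + 1) = q ^ n * A n k + A (n + 1) k) :
    ∀ n m : ℕ, A m n = ∑ k ∈ Finset.range (n + 1),
      q ^ (m * (n - k)) * qbinom q n k * a (m + k) := by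
  intro n
  induction n with
  | zero => intro m; simp [hA0, qbinom]
  | succ n ih =>
    intro m
    rw [hA m n, ih m, ih (m + 1), Finset.mul_sum,
      Finset.sum_range_succ' (fun k => q ^ m * (q ^ (m * (n - k)) * qbinom q n k * a (m + k))) n,
      Finset.sum_range_succ'
        (fun k => q ^ (m * (n + 1 - k)) * qbinom q (n + 1) k * a (m + k)) (n + 1)]
    have hz : (∑ j ∈ Finset.range n,
          q ^ m * (q ^ (m * (n - (j + 1))) * qbinom q n (j + 1) * a (m + (j + 1))))
        = ∑ j ∈ Finset.range (n + 1),
          q ^ m * (q ^ (m * (n - (j + 1))) * qbinom q n (j + 1) * a (m + (j + 1))) := by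
      rw [Finset.sum_range_succ, qbinom_eq_zero q n (n + 1) (by omega)]
      ring
    have hc : q ^ m * (q ^ (m * (n - 0)) * qbinom q n 0 * a (m + 0))
        = q ^ (m * (n + 1 - 0)) * qbinom q (n + 1) 0 * a (m + 0) := by
      rw [qbinom_zero', qbinom_zero', Nat.sub_zero, Nat.sub_zero,
        show m * (n + 1) = m * n + m from by ring, pow_add]
      ring
    rw [hz, hc, add_right_comm]
    congr 1
    rw [← Finset.sum_add_distrib]
    apply Finset.sum_congr rfl
    intro j hj
    rw [Finset.mem_range] at hj
    rw [qbinom_succ_succ q n j, show n + 1 - (j + 1) = n - j from by omega,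
      show m + 1 + j = m + (j + 1) from by omega]
    rcases lt_or_ge j n with h | h
    · obtain ⟨d, rfl⟩ : ∃ d, n = j + 1 + d := ⟨n - j - 1, by omega⟩
      rw [show j + 1 + d - (j + 1) = d from by omega,
        show j + 1 + d - j = d + 1 from by omega,
        show m * (d + 1) = m * d + m from by ring,
        show (m + 1) * (d + 1) = m * d + m + (d + 1) from by ring, pow_add, pow_add]
      ring
    · have hn : j = n := by omega
      subst hn
      rw [qbinom_eq_zero q j (j + 1) (by omega), show j - j = 0 from by omega]
      ring

/-- q-Seidel matrix identity: the final sequence `a₀ⁿ` is the q-binomial transform of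
the initial sequence `aₖ⁰ = aₖ`. -/
theorem qSeidel_final_sequence {R : Type*} [CommRing R] (q : R) (a : ℕ → R)
    (A : ℕ → ℕ → R) (hA0 : ∀ n, A n 0 = a n)
    (hA : ∀ n k, A n (k + 1) = q ^ n * A n k + A (n + 1) k) :
    ∀ n : ℕ, A 0 n = ∑ k ∈ Finset.range (n + 1), qbinom q n k * a k := by
  intro n
  rw [qSeidel_key q a A hA0 hA n 0]
  simp
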